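/- arXiv:2508.20059 — 3 statements merged into one kernel-verified Lean document; each statement's English description precedes it below -/
import Mathlib

section
/- The infimum of ε·KL(π‖μ1⊗μ2) − ∫_{X×Y} ℓ dπ, taken over all Borel probability measures π on X×Y whose first marginal equals μ1, is equal to −∫_X B dμ1 where B(x) = ε log ∫_Y exp(ℓ(x,y)/ε) dμ2(y). -/
/-!
Put `h = ℓ / ε` and `log Z x = log ∫ exp (h (x, y)) dμ2(y)`, so that `B = ε · log Z`. Tilting
`μ1 ⊗ μ2` by `h (x, y) - log Z x` gives a probability measure `π*` whose conditional densities
`exp (h (x, ·)) / Z x` integrate to one against `μ2`, so its first marginal is `μ1`. For a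
coupling `π` with first marginal `μ1`, the tilting formula for log-likelihood ratios reads
`KL(π‖π*) = KL(π‖μ1 ⊗ μ2) - ∫ h dπ + ∫ log Z dμ1`. Gibbs' inequality `KL(π‖π*) ≥ 0`, multiplied
by `ε`, is the lower bound `-∫ B dμ1`, and `π = π*` attains it.
-/

open MeasureTheory Classical

/-- Kullback–Leibler divergence: `∫ log(dp/dq) dp` when `p ≪ q` (and the
integrand is `p`-integrable), and `+∞` otherwise. -/
noncomputable def klDiv {Ω : Type*} [MeasurableSpace Ω] (p q : Measure Ω) : EReal :=
  if p ≪ q ∧ Integrable (fun ω => Real.log (p.rnDeriv q ω).toReal) p then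
    ((∫ ω, Real.log (p.rnDeriv q ω).toReal ∂p : ℝ) : EReal)
  else ⊤

lemma klDiv_eq_integral_llr {Ω : Type*} [MeasurableSpace Ω] {p q : Measure Ω} (hac : p ≪ q)
    (hint : Integrable (llr p q) p) : klDiv p q = ((∫ ω, llr p q ω ∂p : ℝ) : EReal) :=
  if_pos ⟨hac, hint⟩

lemma klDiv_eq_top {Ω : Type*} [MeasurableSpace Ω] {p q : Measure Ω}
    (h : ¬(p ≪ q ∧ Integrable (llr p q) p)) : klDiv p q = ⊤ :=
  if_neg h

lemma abs_div_le_div_of_abs_le {α : Type*} {f : α → ℝ} {C ε : ℝ} (hε : 0 < ε)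
    (hC : ∀ x, |f x| ≤ C) (x : α) : |f x / ε| ≤ C / ε := by
  rw [abs_div, abs_of_pos hε]
  exact div_le_div_of_nonneg_right (hC x) hε.le

lemma integrable_exp_of_abs_le {α : Type*} [MeasurableSpace α] {μ : Measure α}
    [IsFiniteMeasure μ] {f : α → ℝ} {C : ℝ} (hf : Measurable f) (hC : ∀ x, |f x| ≤ C) :
    Integrable (fun x => Real.exp (f x)) μ :=
  .of_bound hf.exp.aestronglyMeasurable (Real.exp C) <| ae_of_all _ fun x => by
    rw [Real.norm_eq_abs, Real.abs_exp]
    exact Real.exp_le_exp.2 (abs_le.1 (hC x)).2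

noncomputable def condLogPartition {α β : Type*} [MeasurableSpace β] (ν : Measure β)
    (h : α × β → ℝ) (x : α) : ℝ :=
  Real.log (∫ y, Real.exp (h (x, y)) ∂ν)

noncomputable def gibbsCoupling {α β : Type*} [MeasurableSpace α] [MeasurableSpace β]
    (μ : Measure α) (ν : Measure β) (h : α × β → ℝ) : Measure (α × β) :=
  (μ.prod ν).tilted fun p => h p - condLogPartition ν h p.1

section GibbsCoupling

open Real

variable {α β : Type*} [MeasurableSpace α] [MeasurableSpace β] {μ : Measure α} {ν : Measure β}
  {h : α × β → ℝ} {C : ℝ}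

lemma gibbsCoupling_absolutelyContinuous : gibbsCoupling μ ν h ≪ μ.prod ν :=
  tilted_absolutelyContinuous _ _

variable [IsProbabilityMeasure ν]

lemma measurable_condLogPartition (hm : Measurable h) : Measurable (condLogPartition ν h) :=
  (hm.exp.stronglyMeasurable.integral_prod_right' (ν := ν)).measurable.log

lemma abs_condLogPartition_le (hm : Measurable h) (hC : ∀ p, |h p| ≤ C) (x : α) :
    |condLogPartition ν h x| ≤ C := by
  have hint : Integrable (fun y => exp (h (x, y))) ν :=
    integrable_exp_of_abs_le (hm.comp measurable_prodMk_left) fun y => hC (x, y)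
  have hlow : exp (-C) ≤ ∫ y, exp (h (x, y)) ∂ν := by
    simpa using integral_mono (integrable_const (exp (-C))) hint
      fun y => exp_le_exp.2 (abs_le.1 (hC (x, y))).1
  have hup : ∫ y, exp (h (x, y)) ∂ν ≤ exp C := by
    simpa using integral_mono hint (integrable_const (exp C))
      fun y => exp_le_exp.2 (abs_le.1 (hC (x, y))).2
  have hpos := (exp_pos _).trans_le hlow
  rw [condLogPartition, abs_le, le_log_iff_exp_le hpos, log_le_iff_le_exp hpos]
  exact ⟨hlow, hup⟩

lemma integral_exp_sub_condLogPartition (hm : Measurable h) (hC : ∀ p, |h p| ≤ C) (x : α) :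
    ∫ y, exp (h (x, y) - condLogPartition ν h x) ∂ν = 1 := by
  have hint : Integrable (fun y => exp (h (x, y))) ν :=
    integrable_exp_of_abs_le (hm.comp measurable_prodMk_left) fun y => hC (x, y)
  simp_rw [exp_sub, condLogPartition, exp_log (integral_exp_pos hint)]
  rw [integral_div, div_self (integral_exp_pos hint).ne']

lemma measurable_sub_condLogPartition (hm : Measurable h) :
    Measurable fun p : α × β => h p - condLogPartition ν h p.1 :=
  hm.sub ((measurable_condLogPartition hm).comp measurable_fst)

lemma abs_sub_condLogPartition_le (hm : Measurable h) (hC : ∀ p, |h p| ≤ C) (p : α × β) :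
    |h p - condLogPartition ν h p.1| ≤ C + C :=
  (abs_sub _ _).trans (add_le_add (hC p) (abs_condLogPartition_le hm hC p.1))

lemma integrable_sub_condLogPartition (hm : Measurable h) (hC : ∀ p, |h p| ≤ C)
    (ρ : Measure (α × β)) [IsFiniteMeasure ρ] :
    Integrable (fun p => h p - condLogPartition ν h p.1) ρ :=
  .of_bound (measurable_sub_condLogPartition hm).aestronglyMeasurable _
    (ae_of_all _ (abs_sub_condLogPartition_le hm hC))

lemma integrable_exp_sub_condLogPartition (hm : Measurable h) (hC : ∀ p, |h p| ≤ C)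
    (ρ : Measure (α × β)) [IsFiniteMeasure ρ] :
    Integrable (fun p => exp (h p - condLogPartition ν h p.1)) ρ :=
  integrable_exp_of_abs_le (measurable_sub_condLogPartition hm) (abs_sub_condLogPartition_le hm hC)

lemma integral_sub_condLogPartition_of_map_fst (hm : Measurable h) (hC : ∀ p, |h p| ≤ C)
    {ρ : Measure (α × β)} [IsFiniteMeasure ρ] (hρ : ρ.map Prod.fst = μ) :
    ∫ p, (h p - condLogPartition ν h p.1) ∂ρ = ∫ p, h p ∂ρ - ∫ x, condLogPartition ν h x ∂μ := by
  have hlogZ : Integrable (fun p : α × β => condLogPartition ν h p.1) ρ :=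
    .of_bound ((measurable_condLogPartition hm).comp measurable_fst).aestronglyMeasurable _
      (ae_of_all _ fun p => abs_condLogPartition_le hm hC p.1)
  rw [integral_sub (.of_bound hm.aestronglyMeasurable _ (ae_of_all _ hC)) hlogZ, ← hρ,
    integral_map measurable_fst.aemeasurable
      (measurable_condLogPartition hm).aestronglyMeasurable]

variable [IsProbabilityMeasure μ]

lemma integral_prod_exp_sub_condLogPartition (hm : Measurable h) (hC : ∀ p, |h p| ≤ C) :
    ∫ p, exp (h p - condLogPartition ν h p.1) ∂(μ.prod ν) = 1 := by
  rw [integral_prod _ (integrable_exp_sub_condLogPartition hm hC _)]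
  simp [integral_exp_sub_condLogPartition hm hC]

lemma isProbabilityMeasure_gibbsCoupling (hm : Measurable h) (hC : ∀ p, |h p| ≤ C) :
    IsProbabilityMeasure (gibbsCoupling μ ν h) :=
  isProbabilityMeasure_tilted (integrable_exp_sub_condLogPartition hm hC _)

lemma map_fst_gibbsCoupling (hm : Measurable h) (hC : ∀ p, |h p| ≤ C) :
    (gibbsCoupling μ ν h).map Prod.fst = μ := by
  ext s hs
  rw [Measure.map_apply measurable_fst hs, ← Set.prod_univ, gibbsCoupling,
    tilted_apply_eq_ofReal_integral' _ (hs.prod .univ),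
    integral_prod_exp_sub_condLogPartition hm hC]
  simp_rw [div_one]
  rw [setIntegral_prod _ (integrable_exp_sub_condLogPartition hm hC _).integrableOn]
  simp [integral_exp_sub_condLogPartition hm hC]

lemma integral_sub_integral_condLogPartition_le_integral_llr (hm : Measurable h)
    (hC : ∀ p, |h p| ≤ C) {ρ : Measure (α × β)} [IsProbabilityMeasure ρ]
    (hρ : ρ.map Prod.fst = μ) (hac : ρ ≪ μ.prod ν) (hint : Integrable (llr ρ (μ.prod ν)) ρ) :
    ∫ p, h p ∂ρ - ∫ x, condLogPartition ν h x ∂μ ≤ ∫ p, llr ρ (μ.prod ν) p ∂ρ := by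
  have hexp := integrable_exp_sub_condLogPartition hm hC (ν := ν) (μ.prod ν)
  have hf := integrable_sub_condLogPartition hm hC (ν := ν) ρ
  have := isProbabilityMeasure_gibbsCoupling (μ := μ) (ν := ν) hm hC
  have hgibbs : 0 ≤ ∫ p, llr ρ (gibbsCoupling μ ν h) p ∂ρ := by
    simpa using InformationTheory.integral_llr_add_sub_measure_univ_nonneg
      (ν := gibbsCoupling μ ν h) (hac.trans (absolutelyContinuous_tilted hexp))
      (integrable_llr_tilted_right hac hf hint hexp)
  rw [gibbsCoupling, integral_llr_tilted_right hac hf hexp hint,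
    integral_prod_exp_sub_condLogPartition hm hC, log_one,
    integral_sub_condLogPartition_of_map_fst hm hC hρ] at hgibbs
  linarith

lemma llr_gibbsCoupling (hm : Measurable h) (hC : ∀ p, |h p| ≤ C) :
    llr (gibbsCoupling μ ν h) (μ.prod ν) =ᵐ[gibbsCoupling μ ν h]
      fun p => h p - condLogPartition ν h p.1 := by
  have hexp := integrable_exp_sub_condLogPartition hm hC (ν := ν) (μ.prod ν)
  filter_upwards [gibbsCoupling_absolutelyContinuous.ae_le (log_rnDeriv_tilted_left_self hexp)]
    with p hp
  rw [llr, gibbsCoupling, hp, integral_prod_exp_sub_condLogPartition hm hC, log_one, sub_zero]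

lemma integrable_llr_gibbsCoupling (hm : Measurable h) (hC : ∀ p, |h p| ≤ C) :
    Integrable (llr (gibbsCoupling μ ν h) (μ.prod ν)) (gibbsCoupling μ ν h) :=
  have := isProbabilityMeasure_gibbsCoupling (μ := μ) (ν := ν) hm hC
  (integrable_sub_condLogPartition hm hC _).congr (llr_gibbsCoupling hm hC).symm

lemma integral_llr_gibbsCoupling (hm : Measurable h) (hC : ∀ p, |h p| ≤ C) :
    ∫ p, llr (gibbsCoupling μ ν h) (μ.prod ν) p ∂(gibbsCoupling μ ν h)
      = ∫ p, h p ∂(gibbsCoupling μ ν h) - ∫ x, condLogPartition ν h x ∂μ := by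
  have := isProbabilityMeasure_gibbsCoupling (μ := μ) (ν := ν) hm hC
  rw [integral_congr_ae (llr_gibbsCoupling hm hC),
    integral_sub_condLogPartition_of_map_fst hm hC (map_fst_gibbsCoupling hm hC)]

end GibbsCoupling

section EntropicCost

variable {α β : Type*} [MeasurableSpace α] [MeasurableSpace β] {μ : Measure α} {ν : Measure β}
  [IsProbabilityMeasure μ] [IsProbabilityMeasure ν] {ℓ : α × β → ℝ} {ε C : ℝ}

lemma neg_integral_le_mul_klDiv_sub_integral (hε : 0 < ε) (hm : Measurable ℓ)
    (hC : ∀ p, |ℓ p| ≤ C) {ρ : Measure (α × β)} [IsProbabilityMeasure ρ]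
    (hρ : ρ.map Prod.fst = μ) :
    ((-∫ x, ε * condLogPartition ν (fun p => ℓ p / ε) x ∂μ : ℝ) : EReal)
      ≤ ε * klDiv ρ (μ.prod ν) - ((∫ p, ℓ p ∂ρ : ℝ) : EReal) := by
  by_cases hKL : ρ ≪ μ.prod ν ∧ Integrable (llr ρ (μ.prod ν)) ρ
  · have hle := integral_sub_integral_condLogPartition_le_integral_llr (hm.div_const ε)
      (abs_div_le_div_of_abs_le hε hC) hρ hKL.1 hKL.2
    rw [integral_div] at hle
    have hle' := mul_le_mul_of_nonneg_left hle hε.le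
    rw [mul_sub, mul_div_cancel₀ _ hε.ne'] at hle'
    rw [klDiv_eq_integral_llr hKL.1 hKL.2, ← EReal.coe_mul, ← EReal.coe_sub,
      EReal.coe_le_coe_iff, integral_const_mul]
    linarith
  · rw [klDiv_eq_top hKL, EReal.coe_mul_top_of_pos hε, EReal.top_sub_coe]
    exact le_top

lemma mul_klDiv_gibbsCoupling_sub_integral (hε : 0 < ε) (hm : Measurable ℓ)
    (hC : ∀ p, |ℓ p| ≤ C) :
    ε * klDiv (gibbsCoupling μ ν fun p => ℓ p / ε) (μ.prod ν)
        - ((∫ p, ℓ p ∂(gibbsCoupling μ ν fun p => ℓ p / ε) : ℝ) : EReal)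
      = ((-∫ x, ε * condLogPartition ν (fun p => ℓ p / ε) x ∂μ : ℝ) : EReal) := by
  have hm' := hm.div_const ε
  have hC' := abs_div_le_div_of_abs_le hε hC
  rw [klDiv_eq_integral_llr gibbsCoupling_absolutelyContinuous
      (integrable_llr_gibbsCoupling hm' hC'),
    integral_llr_gibbsCoupling hm' hC', ← EReal.coe_mul, ← EReal.coe_sub, integral_div,
    integral_const_mul]
  congr 1
  field_simp
  ring

end EntropicCost

theorem mcot_dual_inf_value_general
    {X Y : Type*} [MetricSpace X] [CompactSpace X] [MeasurableSpace X] [BorelSpace X]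
    [MetricSpace Y] [MeasurableSpace Y] [BorelSpace Y]
    (μ1 : Measure X) [IsProbabilityMeasure μ1] (μ2 : Measure Y) [IsProbabilityMeasure μ2]
    (ε : ℝ) (hε : 0 < ε)
    (ℓ : X × Y → ℝ) (hℓ : Continuous ℓ) (hbd : ∃ C : ℝ, ∀ p, |ℓ p| ≤ C)
    (B : X → ℝ) (hB : ∀ x, B x = ε * Real.log (∫ y, Real.exp (ℓ (x, y) / ε) ∂μ2)) :
    (⨅ (π : Measure (X × Y)) (_ : IsProbabilityMeasure π) (_ : π.map Prod.fst = μ1),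
        ((ε : EReal) * klDiv π (μ1.prod μ2) - ((∫ p, ℓ p ∂π : ℝ) : EReal)))
      = ((-∫ x, B x ∂μ1 : ℝ) : EReal) := by
  obtain ⟨C, hC⟩ := hbd
  obtain rfl : B = fun x => ε * condLogPartition μ2 (fun p => ℓ p / ε) x := funext hB
  have hm := hℓ.measurable
  have hC' := abs_div_le_div_of_abs_le hε hC
  refine le_antisymm ?_ (le_iInf₂ fun ρ _ => le_iInf fun hρ =>
    neg_integral_le_mul_klDiv_sub_integral hε hm hC hρ)
  exact iInf₂_le_of_le _ (isProbabilityMeasure_gibbsCoupling (hm.div_const ε) hC') <|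
    iInf_le_of_le (map_fst_gibbsCoupling (hm.div_const ε) hC')
      (mul_klDiv_gibbsCoupling_sub_integral hε hm hC).le

/-- The infimum of `ε·KL(π‖μ1⊗μ2) − ∫ ℓ dπ` over probability measures `π` on
`X × Y` with first marginal `μ1` equals `−∫ B dμ1`, where
`B x = ε log ∫ exp(ℓ(x,y)/ε) dμ2(y)`. -/
theorem mcot_dual_inf_value
    {X Y : Type*} [MetricSpace X] [CompactSpace X] [MeasurableSpace X] [BorelSpace X]
    [MetricSpace Y] [CompactSpace Y] [MeasurableSpace Y] [BorelSpace Y]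
    (μ1 : Measure X) [IsProbabilityMeasure μ1] (μ2 : Measure Y) [IsProbabilityMeasure μ2]
    (ε : ℝ) (hε : 0 < ε)
    (ℓ : X × Y → ℝ) (hℓ : Continuous ℓ) (hbd : ∃ C : ℝ, ∀ p, |ℓ p| ≤ C)
    (B : X → ℝ) (hB : ∀ x, B x = ε * Real.log (∫ y, Real.exp (ℓ (x, y) / ε) ∂μ2)) :
    (⨅ (π : Measure (X × Y)) (_ : IsProbabilityMeasure π) (_ : π.map Prod.fst = μ1),
        ((ε : EReal) * klDiv π (μ1.prod μ2) - ((∫ p, ℓ p ∂π : ℝ) : EReal)))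
      = ((-∫ x, B x ∂μ1 : ℝ) : EReal) :=
  mcot_dual_inf_value_general μ1 μ2 ε hε ℓ hℓ hbd B hB
end

section
/- Let J : ℝ^A → ℝ be defined by J(ζ) = ∫_X log( ∫_Y exp( ζᵀf(y) − ε^{-1} c(x,y) ) dμ2(y) ) dμ1(x), and for each ζ ∈ ℝ^A and x ∈ X let K_ζ(x,·) be the probability measure on Y with density dK_ζ(x,·)/dμ2(y) = exp( ζᵀf(y) − ε^{-1} c(x,y) ) / ∫_Y exp( ζᵀf(y') − ε^{-1} c(x,y') ) dμ2(y'). Then for every ζ ∈ ℝ^A and every a ∈ {1,…,A}, the partial derivative of J satisfies ∂J/∂ζ_a (ζ) = ∫_X ( ∫_Y f_a(y) dK_ζ(x,·)(y) ) dμ1(x); that is, the gradient of J at ζ equals the expectation of f(Y) under the joint law dπ^ζ(x,y) = dK_ζ(x,·)(y) dμ1(x). -/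
/-!
For fixed `x`, the log-partition function `ζ ↦ log ∫ exp (⟪ζ, f y⟫ + g y) dμ₂` has as gradient
the mean of `f` under the exponentially tilted measure `μ₂.tilted (⟪ζ, f ·⟫ + g)`, which is
exactly `K_ζ(x, ·)`. Being a mean of `f`, this gradient is bounded by `sup ‖f‖` uniformly in `x`
and `ζ`, so a constant dominates it and the derivative passes under the outer integral.
-/

open MeasureTheory Real

section LogPartition

variable {Y E : Type*} {mY : MeasurableSpace Y} {μ : Measure Y}
  [NormedAddCommGroup E] [NormedSpace ℝ E] {L : Y → StrongDual ℝ E} {g : Y → ℝ} {M : ℝ}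

lemma exp_apply_add_le {ℓ : StrongDual ℝ E} {ζ : E} {r : ℝ} (hℓ : ‖ℓ‖ ≤ M) (hζ : ‖ζ‖ ≤ r)
    (t : ℝ) : exp (ℓ ζ + t) ≤ exp (M * r) * exp t := by
  rw [exp_add]
  gcongr
  calc ℓ ζ ≤ ‖ℓ‖ * ‖ζ‖ := (le_abs_self _).trans (ℓ.le_opNorm ζ)
    _ ≤ M * r := mul_le_mul hℓ hζ (norm_nonneg _) ((norm_nonneg _).trans hℓ)

lemma integrable_exp_apply_add (hL : AEStronglyMeasurable L μ) (hLM : ∀ᵐ y ∂μ, ‖L y‖ ≤ M)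
    (hg : Integrable (fun y ↦ exp (g y)) μ) (ζ : E) :
    Integrable (fun y ↦ exp (L y ζ + g y)) μ := by
  have hmeas : AEStronglyMeasurable (fun y ↦ exp (L y ζ + g y)) μ := by
    simp_rw [exp_add]
    have hexp_eval : Continuous fun ℓ : StrongDual ℝ E ↦ exp (ℓ ζ) :=
      continuous_exp.comp (ContinuousLinearMap.apply ℝ ℝ ζ).continuous
    exact (hexp_eval.comp_aestronglyMeasurable hL).mul hg.aestronglyMeasurable
  refine (hg.const_mul (exp (M * ‖ζ‖))).mono' hmeas ?_
  filter_upwards [hLM] with y hy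
  rw [norm_of_nonneg (exp_pos _).le]
  exact exp_apply_add_le hy le_rfl _

lemma hasFDerivAt_integral_exp_apply_add (hL : AEStronglyMeasurable L μ)
    (hLM : ∀ᵐ y ∂μ, ‖L y‖ ≤ M) (hg : Integrable (fun y ↦ exp (g y)) μ) (ζ : E) :
    HasFDerivAt (fun w ↦ ∫ y, exp (L y w + g y) ∂μ) (∫ y, exp (L y ζ + g y) • L y ∂μ) ζ := by
  refine hasFDerivAt_integral_of_dominated_of_fderiv_le
    (bound := fun y ↦ exp (M * (‖ζ‖ + 1)) * exp (g y) * M) (Metric.ball_mem_nhds ζ one_pos)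
    (.of_forall fun w ↦ (integrable_exp_apply_add hL hLM hg w).aestronglyMeasurable)
    (integrable_exp_apply_add hL hLM hg ζ)
    ((integrable_exp_apply_add hL hLM hg ζ).aestronglyMeasurable.smul hL) ?_
    ((hg.const_mul _).mul_const _) (.of_forall fun y w _ ↦ ((L y).hasFDerivAt.add_const _).exp)
  filter_upwards [hLM] with y hy w hw
  have hw' : ‖w‖ ≤ ‖ζ‖ + 1 := by
    have := norm_le_norm_add_norm_sub' w ζ
    rw [Metric.mem_ball, dist_eq_norm] at hw
    linarith
  rw [norm_smul, norm_of_nonneg (exp_pos _).le]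
  exact mul_le_mul (exp_apply_add_le hy hw' _) hy (norm_nonneg _) (by positivity)

lemma integral_tilted_eq_inv_smul {G : Type*} [NormedAddCommGroup G] [NormedSpace ℝ G]
    (φ : Y → ℝ) (F : Y → G) :
    ∫ y, F y ∂(μ.tilted φ) = (∫ y, exp (φ y) ∂μ)⁻¹ • ∫ y, exp (φ y) • F y ∂μ := by
  simp_rw [integral_tilted, div_eq_inv_mul, mul_smul]
  exact integral_smul _ _

lemma norm_integral_tilted_le [NeZero μ] {G : Type*} [NormedAddCommGroup G] [NormedSpace ℝ G]
    {φ : Y → ℝ} (hφ : Integrable (fun y ↦ exp (φ y)) μ) {F : Y → G}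
    (hF : ∀ᵐ y ∂μ, ‖F y‖ ≤ M) : ‖∫ y, F y ∂(μ.tilted φ)‖ ≤ M := by
  have := isProbabilityMeasure_tilted hφ
  simpa using norm_integral_le_of_norm_le_const (tilted_absolutelyContinuous μ φ hF)

lemma hasFDerivAt_log_integral_exp_apply_add [NeZero μ] (hL : AEStronglyMeasurable L μ)
    (hLM : ∀ᵐ y ∂μ, ‖L y‖ ≤ M) (hg : Integrable (fun y ↦ exp (g y)) μ) (ζ : E) :
    HasFDerivAt (fun w ↦ log (∫ y, exp (L y w + g y) ∂μ))
      (∫ y, L y ∂(μ.tilted fun y ↦ L y ζ + g y)) ζ := by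
  rw [integral_tilted_eq_inv_smul]
  exact (hasFDerivAt_integral_exp_apply_add hL hLM hg ζ).log
    (integral_exp_pos (integrable_exp_apply_add hL hLM hg ζ)).ne'

end LogPartition

lemma Continuous.integrable_of_compactSpace {α G : Type*} [TopologicalSpace α] [CompactSpace α]
    [MeasurableSpace α] [OpensMeasurableSpace α] [NormedAddCommGroup G] {μ : Measure α}
    [IsFiniteMeasure μ] {F : α → G} (hF : Continuous F) : Integrable F μ :=
  hF.integrable_of_hasCompactSupport (.of_compactSpace F)

lemma continuous_integral_of_continuous_uncurry {α β G : Type*} [PseudoMetricSpace α]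
    [LocallyCompactSpace α] [PseudoMetricSpace β] [CompactSpace β] [MeasurableSpace β]
    [OpensMeasurableSpace β] [NormedAddCommGroup G] [NormedSpace ℝ G] {μ : Measure β} [IsFiniteMeasure μ]
    {F : α → β → G} (hF : Continuous F.uncurry) : Continuous fun a ↦ ∫ b, F a b ∂μ := by
  simpa using continuous_parametric_integral_of_continuous (μ := μ) hF isCompact_univ

lemma integral_exp_pos_of_continuous {Y : Type*} [TopologicalSpace Y] [CompactSpace Y]
    [MeasurableSpace Y] [OpensMeasurableSpace Y] {μ : Measure Y} [IsFiniteMeasure μ] [NeZero μ]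
    {φ : Y → ℝ} (hφ : Continuous φ) : 0 < ∫ y, exp (φ y) ∂μ :=
  integral_exp_pos (continuous_exp.comp hφ).integrable_of_compactSpace

section DualFunction

variable {X Y E : Type*} [PseudoMetricSpace X] [CompactSpace X] [PseudoMetricSpace Y]
  [CompactSpace Y] [MeasurableSpace Y] [OpensMeasurableSpace Y] [NormedAddCommGroup E]
  [NormedSpace ℝ E] {μ2 : Measure Y} [IsFiniteMeasure μ2] [NeZero μ2]
  {L : Y → StrongDual ℝ E} {g : X × Y → ℝ}

lemma continuous_integral_tilted_apply_add (hL : Continuous L) (hg : Continuous g) (ζ : E) :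
    Continuous fun x ↦ ∫ y, L y ∂(μ2.tilted fun y ↦ L y ζ + g (x, y)) := by
  simp_rw [integral_tilted_eq_inv_smul]
  exact ((continuous_integral_of_continuous_uncurry (by fun_prop)).inv₀
    fun x ↦ (integral_exp_pos_of_continuous (by fun_prop)).ne').smul
    (continuous_integral_of_continuous_uncurry (by fun_prop))

theorem hasFDerivAt_integral_log_integral_exp_apply_add [MeasurableSpace X]
    [OpensMeasurableSpace X] {μ1 : Measure X} [IsFiniteMeasure μ1] (hL : Continuous L)
    (hg : Continuous g) (ζ : E) :
    HasFDerivAt (fun w ↦ ∫ x, log (∫ y, exp (L y w + g (x, y)) ∂μ2) ∂μ1)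
      (∫ x, ∫ y, L y ∂(μ2.tilted fun y ↦ L y ζ + g (x, y)) ∂μ1) ζ := by
  obtain ⟨M, hM⟩ := isCompact_univ.exists_bound_of_continuousOn hL.continuousOn
  have hLM : ∀ᵐ y ∂μ2, ‖L y‖ ≤ M := .of_forall fun y ↦ hM y trivial
  have hLmeas : AEStronglyMeasurable L μ2 := hL.aestronglyMeasurable_of_compactSpace
  have hexp (x : X) : Integrable (fun y ↦ exp (g (x, y))) μ2 :=
    Continuous.integrable_of_compactSpace (by fun_prop)
  have hlog_cont (w : E) : Continuous fun x ↦ log (∫ y, exp (L y w + g (x, y)) ∂μ2) :=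
    (continuous_integral_of_continuous_uncurry (by fun_prop)).log
      fun x ↦ (integral_exp_pos_of_continuous (by fun_prop)).ne'
  refine hasFDerivAt_integral_of_dominated_of_fderiv_le (bound := fun _ ↦ M) Filter.univ_mem
    (.of_forall fun w ↦ (hlog_cont w).aestronglyMeasurable_of_compactSpace)
    (hlog_cont ζ).integrable_of_compactSpace
    (continuous_integral_tilted_apply_add hL hg ζ).aestronglyMeasurable_of_compactSpace
    (.of_forall fun x w _ ↦ norm_integral_tilted_le
      (integrable_exp_apply_add hLmeas hLM (hexp x) w) hLM)
    (integrable_const M)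
    (.of_forall fun x w _ ↦ hasFDerivAt_log_integral_exp_apply_add hLmeas hLM (hexp x) w)

end DualFunction

section DotProduct

variable {ι : Type*} [Fintype ι]

def dotProductDual (v : ι → ℝ) : StrongDual ℝ (ι → ℝ) :=
  ∑ i, v i • ContinuousLinearMap.proj i

lemma dotProductDual_apply (v w : ι → ℝ) : dotProductDual v w = ∑ i, w i * v i := by
  simp [dotProductDual, mul_comm]

lemma dotProductDual_single [DecidableEq ι] (v : ι → ℝ) (i : ι) :
    dotProductDual v (Pi.single i 1) = v i := by
  simp [dotProductDual_apply, Pi.single_apply]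

lemma Continuous.dotProductDual {Y : Type*} [TopologicalSpace Y] {f : Y → ι → ℝ}
    (hf : Continuous f) : Continuous fun y ↦ dotProductDual (f y) := by
  unfold _root_.dotProductDual
  fun_prop

end DotProduct

theorem mcot_dual_gradient_general
    {X Y : Type*} [MetricSpace X] [CompactSpace X] [MeasurableSpace X] [BorelSpace X]
    [MetricSpace Y] [CompactSpace Y] [MeasurableSpace Y] [BorelSpace Y]
    (μ1 : Measure X) [IsProbabilityMeasure μ1] (μ2 : Measure Y) [IsProbabilityMeasure μ2]
    (ε : ℝ)
    (c : X × Y → ℝ) (hc : Continuous c)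
    (A : ℕ) (f : Y → Fin A → ℝ) (hf : Continuous f)
    (J : (Fin A → ℝ) → ℝ)
    (hJ : ∀ ζ, J ζ = ∫ x, Real.log
      (∫ y, Real.exp ((∑ a, ζ a * f y a) - ε⁻¹ * c (x, y)) ∂μ2) ∂μ1)
    (K : (Fin A → ℝ) → X → Measure Y)
    (hK : ∀ ζ x, K ζ x = μ2.withDensity (fun y => ENNReal.ofReal
      (Real.exp ((∑ b, ζ b * f y b) - ε⁻¹ * c (x, y)) /
        ∫ y', Real.exp ((∑ b, ζ b * f y' b) - ε⁻¹ * c (x, y')) ∂μ2))) :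
    ∀ ζ : Fin A → ℝ, DifferentiableAt ℝ J ζ ∧
      ∀ a : Fin A, fderiv ℝ J ζ (Pi.single a 1)
        = ∫ x, (∫ y, f y a ∂(K ζ x)) ∂μ1 := by
  intro ζ
  have hL := hf.dotProductDual
  have hg : Continuous fun p ↦ -(ε⁻¹ * c p) := by fun_prop
  have hJ' : J = fun w ↦
      ∫ x, log (∫ y, exp (dotProductDual (f y) w + -(ε⁻¹ * c (x, y))) ∂μ2) ∂μ1 := by
    funext w
    simp only [hJ, dotProductDual_apply, ← sub_eq_add_neg]
  have hK' (x : X) : K ζ x = μ2.tilted fun y ↦ dotProductDual (f y) ζ + -(ε⁻¹ * c (x, y)) := by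
    simp only [hK, dotProductDual_apply, ← sub_eq_add_neg]
    -- `Measure.tilted` is defined as exactly this normalized `withDensity`
    rfl
  have hD := hJ' ▸ hasFDerivAt_integral_log_integral_exp_apply_add (μ1 := μ1) (μ2 := μ2) hL hg ζ
  refine ⟨hD.differentiableAt, fun a ↦ ?_⟩
  rw [hD.fderiv, ContinuousLinearMap.integral_apply
    (continuous_integral_tilted_apply_add hL hg ζ).integrable_of_compactSpace]
  congr 1 with x
  rw [hK', ContinuousLinearMap.integral_apply hL.integrable_of_compactSpace]
  simp only [dotProductDual_single]

/-- The gradient of the dual function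
`J(ζ) = ∫ log(∫ exp(ζᵀf(y) − ε⁻¹ c(x,y)) dμ2(y)) dμ1(x)`: for every `ζ` and
coordinate `a`, `∂J/∂ζ_a(ζ) = ∫ (∫ f_a(y) dK_ζ(x,·)(y)) dμ1(x)`, where
`K_ζ(x,·)` is the tilted probability measure with density proportional to
`exp(ζᵀf(y) − ε⁻¹ c(x,y))` with respect to `μ2`. -/
theorem mcot_dual_gradient
    {X Y : Type*} [MetricSpace X] [CompactSpace X] [MeasurableSpace X] [BorelSpace X]
    [MetricSpace Y] [CompactSpace Y] [MeasurableSpace Y] [BorelSpace Y]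
    (μ1 : Measure X) [IsProbabilityMeasure μ1] (μ2 : Measure Y) [IsProbabilityMeasure μ2]
    (ε : ℝ) (hε : 0 < ε)
    (c : X × Y → ℝ) (hc : Continuous c) (hc0 : ∀ p, 0 ≤ c p)
    (A : ℕ) (f : Y → Fin A → ℝ) (hf : Continuous f)
    (J : (Fin A → ℝ) → ℝ)
    (hJ : ∀ ζ, J ζ = ∫ x, Real.log
      (∫ y, Real.exp ((∑ a, ζ a * f y a) - ε⁻¹ * c (x, y)) ∂μ2) ∂μ1)
    (K : (Fin A → ℝ) → X → Measure Y)
    (hK : ∀ ζ x, K ζ x = μ2.withDensity (fun y => ENNReal.ofReal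
      (Real.exp ((∑ b, ζ b * f y b) - ε⁻¹ * c (x, y)) /
        ∫ y', Real.exp ((∑ b, ζ b * f y' b) - ε⁻¹ * c (x, y')) ∂μ2))) :
    ∀ ζ : Fin A → ℝ, DifferentiableAt ℝ J ζ ∧
      ∀ a : Fin A, fderiv ℝ J ζ (Pi.single a 1)
        = ∫ x, (∫ y, f y a ∂(K ζ x)) ∂μ1 :=
  mcot_dual_gradient_general μ1 μ2 ε c hc A f hf J hJ K hK
end

section
/- Let J : ℝ^A → ℝ be defined by J(ζ) = ∫_X log( ∫_Y exp( ζᵀf(y) − ε^{-1} c(x,y) ) dμ2(y) ) dμ1(x). If for every nonzero v ∈ ℝ^A the function y ↦ vᵀf(y) is not μ2-almost everywhere equal to a constant, then J is strictly convex on ℝ^A. -/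
/-!
For fixed `x`, `ζ ↦ log ∫ exp(ζᵀf(y) − ε⁻¹c(x,y)) dμ2(y)` is a log-partition function, and strict
convexity of `exp` (weighted AM-GM) shows that the normalized integral of `exp` of a proper convex
combination of two exponents is `< 1` unless the exponents differ by an a.e. constant, i.e. unless
`(ζ₁ − ζ₂)ᵀf` is a.e. constant. Integrating this pointwise strict inequality over `μ1` keeps it strict.
-/

open MeasureTheory Real Set
open scoped Matrix

section StrictIntegral

variable {X : Type*} [MeasurableSpace X] {μ : Measure X} {g h : X → ℝ}

theorem integral_lt_integral_of_ae_le_of_measure_setOf_lt_ne_zero (hg : Integrable g μ)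
    (hh : Integrable h μ) (hle : g ≤ᵐ[μ] h) (hlt : μ {x | g x < h x} ≠ 0) :
    ∫ x, g x ∂μ < ∫ x, h x ∂μ := by
  rw [← sub_pos, ← integral_sub hh hg, integral_pos_iff_support_of_nonneg_ae]
  · refine pos_iff_ne_zero.2 (mt (measure_mono_null ?_) hlt)
    exact fun x hx => (sub_pos.2 hx.out).ne'
  exacts [hle.mono fun x => sub_nonneg.2, hh.sub hg]

theorem integral_lt_integral_of_forall_lt [NeZero μ] (hg : Integrable g μ) (hh : Integrable h μ)
    (hlt : ∀ x, g x < h x) : ∫ x, g x ∂μ < ∫ x, h x ∂μ :=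
  integral_lt_integral_of_ae_le_of_measure_setOf_lt_ne_zero hg hh
    (ae_of_all _ fun x => (hlt x).le) (by simp [hlt, NeZero.ne μ])

theorem strictConvexOn_integral {E : Type*} [AddCommGroup E] [Module ℝ E] {s : Set E} [NeZero μ]
    {F : E → X → ℝ} (hF : ∀ x, StrictConvexOn ℝ s (F · x))
    (hint : ∀ ζ ∈ s, Integrable (F ζ) μ) :
    StrictConvexOn ℝ s (fun ζ => ∫ x, F ζ x ∂μ) := by
  obtain ⟨x₀⟩ := μ.nonempty_of_neZero
  refine ⟨(hF x₀).1, fun ζ₁ h₁ ζ₂ h₂ hne t s ht hs hts => ?_⟩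
  simp only [smul_eq_mul]
  rw [← integral_const_mul, ← integral_const_mul,
    ← integral_add ((hint ζ₁ h₁).const_mul t) ((hint ζ₂ h₂).const_mul s)]
  exact integral_lt_integral_of_forall_lt (hint _ ((hF x₀).1 h₁ h₂ ht.le hs.le hts))
    (((hint ζ₁ h₁).const_mul t).add ((hint ζ₂ h₂).const_mul s))
    fun x => (hF x).2 h₁ h₂ hne ht hs hts

end StrictIntegral

section LogIntegralExp

variable {Y : Type*} [MeasurableSpace Y] {μ : Measure Y} {A B : Y → ℝ} {t s : ℝ}

theorem aemeasurable_of_integrable_exp (hA : Integrable (fun y => exp (A y)) μ) :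
    AEMeasurable A μ := by
  simpa only [Function.comp_def, log_exp] using measurable_log.comp_aemeasurable hA.aemeasurable

theorem integrable_exp_convexCombination (hA : Integrable (fun y => exp (A y)) μ)
    (hB : Integrable (fun y => exp (B y)) μ) (ht : 0 ≤ t) (hs : 0 ≤ s) (hts : t + s = 1) :
    Integrable (fun y => exp (t * A y + s * B y)) μ := by
  refine ((hA.const_mul t).add (hB.const_mul s)).mono' ?_ (ae_of_all _ fun y => ?_)
  · exact (measurable_exp.comp_aemeasurable
      (((aemeasurable_of_integrable_exp hA).const_mul t).add
        ((aemeasurable_of_integrable_exp hB).const_mul s))).aestronglyMeasurable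
  · simpa [abs_of_pos (exp_pos _)] using
      convexOn_exp.2 (mem_univ (A y)) (mem_univ (B y)) ht hs hts

theorem integral_exp_sub_log_integral_exp [NeZero μ] (hA : Integrable (fun y => exp (A y)) μ) :
    ∫ y, exp (A y - log (∫ y, exp (A y) ∂μ)) ∂μ = 1 := by
  simp only [exp_sub, integral_div, exp_log (integral_exp_pos hA)]
  exact div_self (integral_exp_pos hA).ne'

theorem integral_exp_convexCombination_lt_one (hA : Integrable (fun y => exp (A y)) μ)
    (hB : Integrable (fun y => exp (B y)) μ) (hA1 : ∫ y, exp (A y) ∂μ = 1)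
    (hB1 : ∫ y, exp (B y) ∂μ = 1) (ht : 0 < t) (hs : 0 < s) (hts : t + s = 1)
    (hAB : ¬ A =ᵐ[μ] B) :
    ∫ y, exp (t * A y + s * B y) ∂μ < 1 := by
  have hcomb := (hA.const_mul t).add (hB.const_mul s)
  calc ∫ y, exp (t * A y + s * B y) ∂μ < ∫ y, (t * exp (A y) + s * exp (B y)) ∂μ := by
        refine integral_lt_integral_of_ae_le_of_measure_setOf_lt_ne_zero
          (integrable_exp_convexCombination hA hB ht.le hs.le hts) hcomb
          (ae_of_all _ fun y => ?_) fun hnull => hAB (ae_iff.2 (measure_mono_null ?_ hnull))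
        · simpa using convexOn_exp.2 (mem_univ (A y)) (mem_univ (B y)) ht.le hs.le hts
        · intro y hy
          simpa using strictConvexOn_exp.2 (mem_univ (A y)) (mem_univ (B y)) hy ht hs hts
    _ = 1 := by
        rw [integral_add (hA.const_mul t) (hB.const_mul s), integral_const_mul,
          integral_const_mul, hA1, hB1, mul_one, mul_one, hts]

theorem log_integral_exp_convexCombination_lt [NeZero μ] (hA : Integrable (fun y => exp (A y)) μ)
    (hB : Integrable (fun y => exp (B y)) μ) (ht : 0 < t) (hs : 0 < s) (hts : t + s = 1)
    (hAB : ¬ ∃ k : ℝ, ∀ᵐ y ∂μ, A y - B y = k) :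
    log (∫ y, exp (t * A y + s * B y) ∂μ) <
      t * log (∫ y, exp (A y) ∂μ) + s * log (∫ y, exp (B y) ∂μ) := by
  set a := log (∫ y, exp (A y) ∂μ)
  set b := log (∫ y, exp (B y) ∂μ)
  have hA' : Integrable (fun y => exp (A y - a)) μ := by simpa only [exp_sub] using hA.div_const _
  have hB' : Integrable (fun y => exp (B y - b)) μ := by simpa only [exp_sub] using hB.div_const _
  have hshift : ∀ y, exp (t * A y + s * B y) =
      exp (t * a + s * b) * exp (t * (A y - a) + s * (B y - b)) := fun y => by
    rw [← exp_add]; ring_nf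
  have hnormalized : ∫ y, exp (t * (A y - a) + s * (B y - b)) ∂μ < 1 :=
    integral_exp_convexCombination_lt_one hA' hB' (integral_exp_sub_log_integral_exp hA)
      (integral_exp_sub_log_integral_exp hB) ht hs hts fun hae =>
        hAB ⟨a - b, hae.mono fun y hy => by simp only at hy; linarith⟩
  rw [← log_exp (t * a + s * b), integral_congr_ae (ae_of_all _ hshift), integral_const_mul]
  exact log_lt_log (mul_pos (exp_pos _) (integral_exp_pos
    (integrable_exp_convexCombination hA' hB' ht.le hs.le hts)))
    (mul_lt_of_lt_one_right (exp_pos _) hnormalized)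

theorem strictConvexOn_log_integral_exp_dotProduct {ι : Type*} [Fintype ι] [NeZero μ]
    (f : Y → ι → ℝ) (g : Y → ℝ) (hint : ∀ ζ, Integrable (fun y => exp (ζ ⬝ᵥ f y - g y)) μ)
    (hnd : ∀ v : ι → ℝ, v ≠ 0 → ¬ ∃ k : ℝ, ∀ᵐ y ∂μ, v ⬝ᵥ f y = k) :
    StrictConvexOn ℝ univ (fun ζ => log (∫ y, exp (ζ ⬝ᵥ f y - g y) ∂μ)) := by
  refine ⟨convex_univ, fun ζ₁ _ ζ₂ _ hne t s ht hs hts => ?_⟩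
  have hlinear : ∀ y, (t • ζ₁ + s • ζ₂) ⬝ᵥ f y - g y =
      t * (ζ₁ ⬝ᵥ f y - g y) + s * (ζ₂ ⬝ᵥ f y - g y) := fun y => by
    rw [add_dotProduct, smul_dotProduct, smul_dotProduct, smul_eq_mul, smul_eq_mul]
    linear_combination g y * hts
  simp only [hlinear, smul_eq_mul]
  refine log_integral_exp_convexCombination_lt (hint ζ₁) (hint ζ₂) ht hs hts ?_
  rintro ⟨k, hk⟩
  exact hnd (ζ₁ - ζ₂) (sub_ne_zero.2 hne)
    ⟨k, hk.mono fun y hy => by rw [sub_dotProduct]; linarith⟩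

end LogIntegralExp

theorem mcot_dual_strictly_convex_general
    {X Y : Type*} [MetricSpace X] [CompactSpace X] [MeasurableSpace X] [BorelSpace X]
    [MetricSpace Y] [CompactSpace Y] [MeasurableSpace Y] [BorelSpace Y]
    (μ1 : Measure X) [IsProbabilityMeasure μ1] (μ2 : Measure Y) [IsProbabilityMeasure μ2]
    (ε : ℝ)
    (c : X × Y → ℝ) (hc : Continuous c)
    (A : ℕ) (f : Y → Fin A → ℝ) (hf : Continuous f)
    (J : (Fin A → ℝ) → ℝ)
    (hJ : ∀ ζ, J ζ = ∫ x, Real.log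
      (∫ y, Real.exp ((∑ a, ζ a * f y a) - ε⁻¹ * c (x, y)) ∂μ2) ∂μ1)
    (hnd : ∀ v : Fin A → ℝ, v ≠ 0 → ¬ ∃ k : ℝ, ∀ᵐ y ∂μ2, (∑ a, v a * f y a) = k) :
    StrictConvexOn ℝ Set.univ J := by
  have hexp : ∀ ζ : Fin A → ℝ, Continuous fun p : X × Y => exp (ζ ⬝ᵥ f p.2 - ε⁻¹ * c p) :=
    fun ζ => by fun_prop
  have hpartition : ∀ ζ, Continuous fun x => ∫ y, exp (ζ ⬝ᵥ f y - ε⁻¹ * c (x, y)) ∂μ2 := fun ζ => by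
    simpa using continuous_parametric_integral_of_continuous (μ := μ2) (hexp ζ) isCompact_univ
  have hintegrable : ∀ ζ x, Integrable (fun y => exp (ζ ⬝ᵥ f y - ε⁻¹ * c (x, y))) μ2 :=
    fun ζ x => ((hexp ζ).comp (Continuous.prodMk_right x)).integrable_of_hasCompactSupport
      (.of_compactSpace _)
  rw [show J = _ from funext hJ]
  refine strictConvexOn_integral
    (fun x => strictConvexOn_log_integral_exp_dotProduct f _ (fun ζ => hintegrable ζ x) hnd)
    fun ζ _ => ?_
  exact ((hpartition ζ).log fun x => (integral_exp_pos (hintegrable ζ x)).ne')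
    |>.integrable_of_hasCompactSupport (.of_compactSpace _)

/-- If no nonzero linear combination of the moment functions `f` is
`μ2`-almost everywhere constant, then the dual function
`J(ζ) = ∫ log(∫ exp(ζᵀf(y) − ε⁻¹ c(x,y)) dμ2(y)) dμ1(x)` is strictly convex. -/
theorem mcot_dual_strictly_convex
    {X Y : Type*} [MetricSpace X] [CompactSpace X] [MeasurableSpace X] [BorelSpace X]
    [MetricSpace Y] [CompactSpace Y] [MeasurableSpace Y] [BorelSpace Y]
    (μ1 : Measure X) [IsProbabilityMeasure μ1] (μ2 : Measure Y) [IsProbabilityMeasure μ2]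
    (ε : ℝ) (hε : 0 < ε)
    (c : X × Y → ℝ) (hc : Continuous c) (hc0 : ∀ p, 0 ≤ c p)
    (A : ℕ) (f : Y → Fin A → ℝ) (hf : Continuous f)
    (J : (Fin A → ℝ) → ℝ)
    (hJ : ∀ ζ, J ζ = ∫ x, Real.log
      (∫ y, Real.exp ((∑ a, ζ a * f y a) - ε⁻¹ * c (x, y)) ∂μ2) ∂μ1)
    (hnd : ∀ v : Fin A → ℝ, v ≠ 0 → ¬ ∃ k : ℝ, ∀ᵐ y ∂μ2, (∑ a, v a * f y a) = k) :
    StrictConvexOn ℝ Set.univ J :=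
  mcot_dual_strictly_convex_general μ1 μ2 ε c hc A f hf J hJ hnd
end
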